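/- Let a be a real number with 1/4 < a < 1/2, set c̃ₐ = Γ(2a)/(Γ(1 − 2a)·Γ(4a − 1)) and c″ₐ = 2^{1−4a}·c̃ₐ/(4a − 1). Let 0 < r ≤ 1/3, let θ ∈ (0,π), and let s ∈ [1 − 3r/2, 1 − r/2]. Then, with all complex powers taken as principal powers, c̃ₐ·|∫₀ˢ (ρe^{iθ})^{−2a}(1 − ρe^{iθ})^{4a−2} e^{iθ} dρ| ≤ 1 − c″ₐ·r^{4a−1}. -/

import Mathlib

/-!
On the ray `ρ ↦ ρ e^{iθ}` the integrand has modulus `ρ^{-2a} |1 - ρe^{iθ}|^{4a-2}`, and since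
`|1 - ρe^{iθ}| ≥ 1 - ρ` while `4a - 2 < 0`, it is dominated by the Beta integrand
`ρ^{u-1} (1-ρ)^{v-1}` with `u = 1 - 2a`, `v = 4a - 1`. Because `u + v = 2a`, the constant `c̃ₐ` is
exactly `1 / B(u, v)`, and `c̃ₐ` times the Beta integral over `[0, s]` is `1 - c̃ₐ ∫ₛ¹`.
As `u ≤ 1`, this tail is at least `∫ₛ¹ (1-ρ)^{v-1} dρ = (1-s)^v / v ≥ (r/2)^v / v`.
-/

open Complex Real intervalIntegral MeasureTheory ProbabilityTheory

section BetaIntegral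

variable {u v : ℝ}

lemma intervalIntegrable_rpow_mul_one_sub_rpow (hu : 0 < u) (hv : 0 < v) :
    IntervalIntegrable (fun x : ℝ => x ^ (u - 1) * (1 - x) ^ (v - 1)) volume 0 1 := by
  refine (betaIntegral_convergent (u := u) (v := v) (by simpa) (by simpa)).norm.congr ?_
  intro x hx
  rw [Set.uIoc_of_le zero_le_one] at hx
  simp only [norm_mul, norm_cpow_real, ← ofReal_one, ← ofReal_sub, norm_real,
    Real.norm_of_nonneg hx.1.le, Real.norm_of_nonneg (sub_nonneg.2 hx.2)]

lemma integral_rpow_mul_one_sub_rpow (hu : 0 < u) (hv : 0 < v) :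
    ∫ x in (0 : ℝ)..1, x ^ (u - 1) * (1 - x) ^ (v - 1) = beta u v := by
  have hcomplex : ((∫ x in (0 : ℝ)..1, x ^ (u - 1) * (1 - x) ^ (v - 1) : ℝ) : ℂ) =
      betaIntegral u v := by
    rw [← integral_ofReal, betaIntegral]
    refine integral_congr fun x hx => ?_
    rw [Set.uIcc_of_le zero_le_one] at hx
    push_cast [ofReal_cpow hx.1, ofReal_cpow (sub_nonneg.2 hx.2)]
    rfl
  rw [beta_eq_betaIntegralReal u v hu hv, ← hcomplex, ofReal_re]

lemma one_sub_rpow_div_le_integral_rpow_mul_one_sub_rpow {s : ℝ} (hs0 : 0 < s) (hs1 : s ≤ 1)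
    (hu : 0 < u) (hu1 : u ≤ 1) (hv : 0 < v) :
    (1 - s) ^ v / v ≤ ∫ x in s..1, x ^ (u - 1) * (1 - x) ^ (v - 1) := by
  have hint : IntervalIntegrable (fun x : ℝ => x ^ (u - 1) * (1 - x) ^ (v - 1)) volume s 1 :=
    (intervalIntegrable_rpow_mul_one_sub_rpow hu hv).mono_set
      (Set.uIcc_subset_uIcc_right (Set.mem_uIcc_of_le hs0.le hs1))
  have hint' : IntervalIntegrable (fun x : ℝ => (1 - x) ^ (v - 1)) volume s 1 := by
    simpa using ((intervalIntegrable_rpow' (a := 0) (b := 1 - s)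
      (show -1 < v - 1 by linarith)).comp_sub_left 1).symm
  calc (1 - s) ^ v / v = ∫ x in s..1, (1 - x) ^ (v - 1) := by
        rw [integral_comp_sub_left (fun y : ℝ => y ^ (v - 1)), sub_self,
          integral_rpow (Or.inl (by linarith)), sub_add_cancel, zero_rpow hv.ne', sub_zero]
    _ ≤ ∫ x in s..1, x ^ (u - 1) * (1 - x) ^ (v - 1) := by
        refine integral_mono_on hs1 hint' hint fun x hx => ?_
        have hx0 : 0 < x := hs0.trans_le hx.1
        exact le_mul_of_one_le_left (rpow_nonneg (sub_nonneg.2 hx.2) _)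
          (one_le_rpow_of_pos_of_le_one_of_nonpos hx0 hx.2 (by linarith))

lemma integral_rpow_mul_one_sub_rpow_le {s : ℝ} (hs0 : 0 < s) (hs1 : s ≤ 1) (hu : 0 < u)
    (hu1 : u ≤ 1) (hv : 0 < v) :
    ∫ x in (0 : ℝ)..s, x ^ (u - 1) * (1 - x) ^ (v - 1) ≤ beta u v - (1 - s) ^ v / v := by
  have hint := intervalIntegrable_rpow_mul_one_sub_rpow hu hv
  rw [← integral_rpow_mul_one_sub_rpow hu hv, ← integral_add_adjacent_intervals
    (hint.mono_set (Set.uIcc_subset_uIcc_left (Set.mem_uIcc_of_le hs0.le hs1)))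
    (hint.mono_set (Set.uIcc_subset_uIcc_right (Set.mem_uIcc_of_le hs0.le hs1)))]
  linarith [one_sub_rpow_div_le_integral_rpow_mul_one_sub_rpow hs0 hs1 hu hu1 hv]

end BetaIntegral

lemma norm_cpow_mul_one_sub_cpow_mul_le {w : ℂ} (hw : ‖w‖ = 1) {t : ℝ} (ht0 : 0 ≤ t)
    (ht1 : t < 1) (p : ℝ) {q : ℝ} (hq : q ≤ 0) :
    ‖((t : ℂ) * w) ^ (p : ℂ) * (1 - (t : ℂ) * w) ^ (q : ℂ) * w‖ ≤ t ^ p * (1 - t) ^ q := by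
  have htw : ‖(t : ℂ) * w‖ = t := by
    rw [norm_mul, hw, norm_real, Real.norm_of_nonneg ht0, mul_one]
  have hdist : 1 - t ≤ ‖1 - (t : ℂ) * w‖ := by
    simpa only [norm_one, htw] using norm_sub_norm_le (1 : ℂ) ((t : ℂ) * w)
  rw [norm_mul, norm_mul, hw, mul_one, norm_cpow_real, norm_cpow_real, htw]
  exact mul_le_mul_of_nonneg_left (rpow_le_rpow_of_nonpos (by linarith) hdist hq)
    (rpow_nonneg ht0 p)

lemma norm_integral_cpow_mul_one_sub_cpow_le {w : ℂ} (hw : ‖w‖ = 1) {s : ℝ} (hs0 : 0 ≤ s)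
    (hs1 : s < 1) (p : ℝ) {q : ℝ} (hq : q ≤ 0)
    (hint : IntervalIntegrable (fun x : ℝ => x ^ p * (1 - x) ^ q) volume 0 s) :
    ‖∫ x in (0 : ℝ)..s, ((x : ℂ) * w) ^ (p : ℂ) * (1 - (x : ℂ) * w) ^ (q : ℂ) * w‖ ≤
      ∫ x in (0 : ℝ)..s, x ^ p * (1 - x) ^ q :=
  norm_integral_le_of_norm_le hs0 (Filter.Eventually.of_forall fun _ hx =>
    norm_cpow_mul_one_sub_cpow_mul_le hw hx.1.le (hx.2.trans_lt hs1) p hq) hint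

theorem schwarz_christoffel_semicircle_bound_general (a : ℝ) (ha1 : 1 / 4 < a) (ha2 : a < 1 / 2)
    (r : ℝ) (hr0 : 0 < r) (hr1 : r ≤ 1 / 3)
    (θ : ℝ)
    (s : ℝ) (hs1 : 1 - 3 * r / 2 ≤ s) (hs2 : s ≤ 1 - r / 2) :
    Real.Gamma (2 * a) / (Real.Gamma (1 - 2 * a) * Real.Gamma (4 * a - 1)) *
        ‖(∫ ρ in (0 : ℝ)..s,
            ((ρ : ℂ) * Complex.exp (θ * Complex.I)) ^ ((-(2 * a) : ℝ) : ℂ) *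
              (1 - (ρ : ℂ) * Complex.exp (θ * Complex.I)) ^ ((4 * a - 2 : ℝ) : ℂ) *
              Complex.exp (θ * Complex.I))‖ ≤
      1 - (2 : ℝ) ^ (1 - 4 * a) *
            (Real.Gamma (2 * a) / (Real.Gamma (1 - 2 * a) * Real.Gamma (4 * a - 1))) /
            (4 * a - 1) * r ^ (4 * a - 1) := by
  set u := 1 - 2 * a
  set v := 4 * a - 1
  have hu : 0 < u := by linarith
  have hv : 0 < v := by linarith
  have hs0 : 0 < s := by linarith
  have hs_lt_one : s < 1 := by linarith
  have hbeta : 0 < beta u v := beta_pos hu hv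
  have hc : Real.Gamma (2 * a) / (Real.Gamma u * Real.Gamma v) = (beta u v)⁻¹ := by
    rw [beta, inv_div, show u + v = 2 * a by ring]
  have hnorm := norm_integral_cpow_mul_one_sub_cpow_le (norm_exp_ofReal_mul_I θ) hs0.le
    hs_lt_one (u - 1) (show v - 1 ≤ 0 by linarith)
    ((intervalIntegrable_rpow_mul_one_sub_rpow hu hv).mono_set
      (Set.uIcc_subset_uIcc_left (Set.mem_uIcc_of_le hs0.le hs_lt_one.le)))
  have htail : (r / 2) ^ v ≤ (1 - s) ^ v := rpow_le_rpow (by positivity) (by linarith) hv.le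
  have hbound := integral_rpow_mul_one_sub_rpow_le hs0 hs_lt_one.le hu (by linarith) hv
  rw [hc, show -(2 * a) = u - 1 by ring, show 4 * a - 2 = v - 1 by ring]
  calc (beta u v)⁻¹ * ‖_‖
      ≤ (beta u v)⁻¹ * (beta u v - (r / 2) ^ v / v) := by
        gcongr
        exact hnorm.trans (hbound.trans (by gcongr))
    _ = 1 - 2 ^ (1 - 4 * a) * (beta u v)⁻¹ / v * r ^ v := by
        rw [div_rpow hr0.le zero_le_two, show 1 - 4 * a = -v by ring, rpow_neg zero_le_two,
          mul_sub, inv_mul_cancel₀ hbeta.ne']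
        ring

/-- For `1/4 < a < 1/2`, `c̃ₐ = Γ(2a)/(Γ(1 − 2a)Γ(4a − 1))`,
`c″ₐ = 2^{1−4a}·c̃ₐ/(4a − 1)`, `0 < r ≤ 1/3`, `θ ∈ (0,π)` and
`s ∈ [1 − 3r/2, 1 − r/2]`, with principal-branch complex powers,
`c̃ₐ·|∫₀ˢ (ρe^{iθ})^{−2a}(1 − ρe^{iθ})^{4a−2} e^{iθ} dρ| ≤ 1 − c″ₐ·r^{4a−1}`. -/
theorem schwarz_christoffel_semicircle_bound (a : ℝ) (ha1 : 1 / 4 < a) (ha2 : a < 1 / 2)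
    (r : ℝ) (hr0 : 0 < r) (hr1 : r ≤ 1 / 3)
    (θ : ℝ) (hθ0 : 0 < θ) (hθπ : θ < π)
    (s : ℝ) (hs1 : 1 - 3 * r / 2 ≤ s) (hs2 : s ≤ 1 - r / 2) :
    Real.Gamma (2 * a) / (Real.Gamma (1 - 2 * a) * Real.Gamma (4 * a - 1)) *
        ‖(∫ ρ in (0 : ℝ)..s,
            ((ρ : ℂ) * Complex.exp (θ * Complex.I)) ^ ((-(2 * a) : ℝ) : ℂ) *
              (1 - (ρ : ℂ) * Complex.exp (θ * Complex.I)) ^ ((4 * a - 2 : ℝ) : ℂ) *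
              Complex.exp (θ * Complex.I))‖ ≤
      1 - (2 : ℝ) ^ (1 - 4 * a) *
            (Real.Gamma (2 * a) / (Real.Gamma (1 - 2 * a) * Real.Gamma (4 * a - 1))) /
            (4 * a - 1) * r ^ (4 * a - 1) :=
  schwarz_christoffel_semicircle_bound_general a ha1 ha2 r hr0 hr1 θ s hs1 hs2
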